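/- Let (W,S) be a Coxeter system and Ξ its two-sided Coxeter complex. If (I,u,J) ≤ (I',v,J') in Ξ, then u ≤ v in the two-sided weak order on W. -/

import Mathlib

open CoxeterSystem

variable {B W : Type*} [Group W] {M : CoxeterMatrix B}

/-- The standard parabolic subgroup `W_I` generated by the simple reflections indexed by `I`. -/
def CoxeterSystem.parab (cs : CoxeterSystem M W) (I : Set B) : Subgroup W :=
  Subgroup.closure (cs.simple '' I)

/-- The parabolic double coset `W_I w W_J`. -/
def CoxeterSystem.doset (cs : CoxeterSystem M W) (I : Set B) (w : W) (J : Set B) : Set W :=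
  {x | ∃ a ∈ cs.parab I, ∃ b ∈ cs.parab J, x = a * w * b}

/-- `w` is a minimal-length double coset representative for `W_I \ W / W_J`:
`Des_L(w) ⊆ S − I` and `Des_R(w) ⊆ S − J`. -/
def CoxeterSystem.isMinRep (cs : CoxeterSystem M W) (I : Set B) (w : W) (J : Set B) : Prop :=
  (∀ i ∈ I, ¬ cs.IsLeftDescent w i) ∧ (∀ j ∈ J, ¬ cs.IsRightDescent w j)

/-- Membership in the two-sided Coxeter complex `Ξ`: a triple `(I, w, J)` with
`w ∈ ᴵWᴶ` a minimal-length double coset representative. -/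
def CoxeterSystem.inXi (cs : CoxeterSystem M W) (F : Set B × W × Set B) : Prop :=
  cs.isMinRep F.1 F.2.1 F.2.2

/-- The partial order on `Ξ`: `(I,w,J) ≤ (I',w',J')` iff `I ⊇ I'`, `J ⊇ J'`, and
`W_I w W_J ⊇ W_{I'} w' W_{J'}`. -/
def CoxeterSystem.xiLE (cs : CoxeterSystem M W) (F G : Set B × W × Set B) : Prop :=
  G.1 ⊆ F.1 ∧ G.2.2 ⊆ F.2.2 ∧
    cs.doset G.1 G.2.1 G.2.2 ⊆ cs.doset F.1 F.2.1 F.2.2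

/-- `v` covers `u` in the two-sided weak order: `ℓ(v) = ℓ(u) + 1` and
`v u⁻¹ ∈ S` or `u⁻¹ v ∈ S`. -/
def CoxeterSystem.tsCov (cs : CoxeterSystem M W) (u v : W) : Prop :=
  cs.length v = cs.length u + 1 ∧
    ((∃ i : B, v * u⁻¹ = cs.simple i) ∨ (∃ i : B, u⁻¹ * v = cs.simple i))

/-- The two-sided weak order: the reflexive-transitive closure of the cover relation,
i.e. `u ≤ v` iff there is a chain `u = v₀, v₁, …, v_k = v` of covers. -/
def CoxeterSystem.tsLE (cs : CoxeterSystem M W) : W → W → Prop :=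
  Relation.ReflTransGen cs.tsCov

/-!
Starting from `w ∈ W_I u W_J`, strip a left descent in `I` or a right descent in `J` as long as
there is one: each step stays in the double coset and is a cover of the two-sided weak order. The
process ends at an element without left descents in `I` and right descents in `J`, and such an
element of a double coset is unique, so it is `u`.

Uniqueness rests on the sign cocycle of Björner–Brenti. The simple reflections act on `W × ℤˣ` by
`(t, ε) ↦ (s t s, ±ε)`, the sign flipping exactly at `t = s`; these permutations satisfy the
Coxeter relations, so the parity of the number of occurrences of `t` in the left inversion sequence
of a word depends only on the product of the word. This yields the exchange property, reduced words
in parabolic subgroups, the additivity `ℓ (a x) = ℓ a + ℓ x` for `a ∈ W_I` and `x` without left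
descents in `I`, and Deodhar's lemma, from which uniqueness follows by induction along `W_I` and
`W_J`.
-/

namespace CoxeterSystem

open List

variable (cs : CoxeterSystem M W)

local prefix:100 "s" => cs.simple
local prefix:100 "π" => cs.wordProd
local prefix:100 "ℓ" => cs.length
local prefix:100 "lis " => cs.leftInvSeq

open scoped Classical

lemma simple_conj_eq_simple_iff (i : B) (t : W) : s i * t * s i = s i ↔ t = s i := by
  constructor
  · intro h
    simpa [mul_assoc] using congrArg (fun x => s i * x * s i) h
  · rintro rfl
    simp

noncomputable def simplePerm (i : B) : Equiv.Perm (W × ℤˣ) :=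
  Function.Involutive.toPerm (fun p => (s i * p.1 * s i, if p.1 = s i then -p.2 else p.2))
    (by
      rintro ⟨t, ε⟩
      by_cases ht : t = s i
      · simp [ht]
      · simp only [cs.simple_conj_eq_simple_iff, ht, if_false]
        simp [mul_assoc])

lemma simplePerm_apply (i : B) (t : W) (ε : ℤˣ) :
    cs.simplePerm i (t, ε) = (s i * t * s i, if t = s i then -ε else ε) := rfl

lemma simplePerm_inv (i : B) : (cs.simplePerm i)⁻¹ = cs.simplePerm i :=
  Function.Involutive.toPerm_symm _

lemma prod_map_simplePerm_inv_apply (ω : List B) (t : W) (ε : ℤˣ) :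
    ((ω.map cs.simplePerm).prod)⁻¹ (t, ε) =
      ((π ω)⁻¹ * t * π ω, ε * (-1) ^ (lis ω).count t) := by
  induction ω generalizing t ε with
  | nil => simp
  | cons i ω ih =>
    rw [map_cons, prod_cons, mul_inv_rev, Equiv.Perm.mul_apply, simplePerm_inv,
      simplePerm_apply, ih]
    have hlis : lis (i :: ω) = s i :: (lis ω).map (MulAut.conj (s i)) := rfl
    have hconj : t = MulAut.conj (s i) (s i * t * s i) := by simp [mul_assoc]
    rw [hlis, count_cons, hconj, count_map_of_injective _ _ (MulAut.conj (s i)).injective,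
      ← hconj, wordProd_cons, Prod.mk.injEq]
    refine ⟨by simp [mul_assoc], ?_⟩
    by_cases ht : t = s i
    · subst ht; simp [pow_succ]
    · simp [ht, Ne.symm ht]

lemma prod_map_alternatingWord_two_mul {G : Type*} [Monoid G] (f : B → G) (i j : B) (m : ℕ) :
    ((alternatingWord i j (2 * m)).map f).prod = (f i * f j) ^ m := by
  induction m with
  | zero => simp [alternatingWord]
  | succ m ih =>
    rw [mul_add_one, alternatingWord_succ, alternatingWord_succ, concat_eq_append,
      concat_eq_append, map_append, map_append, prod_append, prod_append, ih, pow_succ]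
    simp [mul_assoc]

lemma getElem_leftInvSeq_braid (i j : B) (k : ℕ) (hk : k < 2 * M i j) :
    (lis (alternatingWord i j (2 * M i j)))[k]'(by simpa using hk) = s i * (s j * s i) ^ k := by
  rw [getElem_leftInvSeq_alternatingWord cs i j _ k hk, prod_alternatingWord_eq_mul_pow]
  have : ¬ Even (2 * k + 1) := by simp [parity_simps]
  simp [this, Nat.add_div_of_dvd_right]

lemma leftInvSeq_braid_eq_append_self (i j : B) :
    ∃ L, lis (alternatingWord i j (2 * M i j)) = L ++ L := by
  set L := lis (alternatingWord i j (2 * M i j)) with hL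
  have hlen : L.length = 2 * M i j := by simp [hL]
  refine ⟨L.take (M i j), ?_⟩
  conv_lhs => rw [← take_append_drop (M i j) L]
  congr 1
  refine ext_getElem (by simp [hlen]; omega) fun k h₁ h₂ => ?_
  simp only [getElem_drop, getElem_take, hL]
  rw [getElem_leftInvSeq_braid, getElem_leftInvSeq_braid, pow_add, simple_mul_simple_pow',
    one_mul]
  all_goals simp at h₁ h₂; omega

lemma isLiftable_simplePerm : M.IsLiftable cs.simplePerm := by
  intro i j
  rw [← prod_map_alternatingWord_two_mul, ← inv_eq_one]
  ext ⟨t, ε⟩ : 1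
  obtain ⟨L, hL⟩ := cs.leftInvSeq_braid_eq_append_self i j
  rw [prod_map_simplePerm_inv_apply, prod_alternatingWord_eq_mul_pow, hL, count_append,
    ← two_mul, pow_mul]
  simp

noncomputable def signRep : W →* Equiv.Perm (W × ℤˣ) :=
  cs.lift ⟨cs.simplePerm, cs.isLiftable_simplePerm⟩

lemma signRep_wordProd (ω : List B) : cs.signRep (π ω) = (ω.map cs.simplePerm).prod := by
  rw [wordProd, map_list_prod, map_map]
  congr 2
  funext i
  exact cs.lift_apply_simple cs.isLiftable_simplePerm i

noncomputable def inversionSign (w t : W) : ℤˣ := (cs.signRep w⁻¹ (t, 1)).2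

lemma signRep_inv_apply (w t : W) (ε : ℤˣ) :
    cs.signRep w⁻¹ (t, ε) = (w⁻¹ * t * w, ε * cs.inversionSign w t) := by
  obtain ⟨ω, rfl⟩ := cs.wordProd_surjective w
  simp [inversionSign, signRep_wordProd, prod_map_simplePerm_inv_apply]

lemma inversionSign_wordProd (ω : List B) (t : W) :
    cs.inversionSign (π ω) t = (-1) ^ (lis ω).count t := by
  simp [inversionSign, signRep_wordProd, prod_map_simplePerm_inv_apply]

lemma inversionSign_mul (u v t : W) :
    cs.inversionSign (u * v) t = cs.inversionSign u t * cs.inversionSign v (u⁻¹ * t * u) := by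
  have h : cs.signRep (u * v)⁻¹ (t, 1) = cs.signRep v⁻¹ (cs.signRep u⁻¹ (t, 1)) := by
    rw [mul_inv_rev, map_mul, Equiv.Perm.mul_apply]
  rw [signRep_inv_apply, signRep_inv_apply, signRep_inv_apply] at h
  simpa using congrArg Prod.snd h

lemma inversionSign_simple_eq_neg_one_iff (i : B) (t : W) :
    cs.inversionSign (s i) t = -1 ↔ t = s i := by
  rw [← wordProd_singleton, inversionSign_wordProd, leftInvSeq_singleton, wordProd_singleton]
  by_cases ht : t = s i
  · simp [ht]
  · simp [ht, Ne.symm ht]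

lemma length_mul_lt_of_inversionSign_eq_neg_one {w t : W} (h : cs.inversionSign w t = -1) :
    ℓ (t * w) < ℓ w := by
  obtain ⟨ω, hω, rfl⟩ := cs.exists_isReduced w
  rw [inversionSign_wordProd] at h
  have ht : t ∈ lis ω := by
    by_contra ht
    simp [count_eq_zero_of_not_mem ht] at h
  exact (cs.isLeftInversion_of_mem_leftInvSeq hω ht).2

lemma inversionSign_simple_eq_neg_one_iff_isLeftDescent (w : W) (i : B) :
    cs.inversionSign w (s i) = -1 ↔ cs.IsLeftDescent w i := by
  refine ⟨cs.length_mul_lt_of_inversionSign_eq_neg_one, fun h => ?_⟩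
  have hw : w = s i * (s i * w) := by simp
  rw [hw, inversionSign_mul, (cs.inversionSign_simple_eq_neg_one_iff i _).2 rfl]
  rcases Int.units_eq_one_or (cs.inversionSign (s i * w) ((s i)⁻¹ * s i * s i)) with h1 | h1
  · rw [h1, mul_one]
  · simp only [inv_simple, simple_mul_simple_self, one_mul] at h1
    have := cs.length_mul_lt_of_inversionSign_eq_neg_one h1
    rw [simple_mul_simple_cancel_left] at this
    exact absurd h (not_lt.2 this.le)

lemma exists_eraseIdx_of_isLeftDescent {ω : List B} {i : B} (h : cs.IsLeftDescent (π ω) i) :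
    ∃ l < ω.length, s i * π ω = π (ω.eraseIdx l) := by
  rw [← inversionSign_simple_eq_neg_one_iff_isLeftDescent, inversionSign_wordProd] at h
  have hmem : s i ∈ lis ω := by
    by_contra hi
    simp [count_eq_zero_of_not_mem hi] at h
  obtain ⟨l, hl, hget⟩ := List.mem_iff_getElem.mp hmem
  refine ⟨l, by simpa using hl, ?_⟩
  rw [← getD_leftInvSeq_mul_wordProd, List.getD_eq_getElem _ 1 hl, hget]

lemma inversionSign_simple_eq_one_iff (w : W) (i : B) :
    cs.inversionSign w (s i) = 1 ↔ ¬ cs.IsLeftDescent w i := by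
  rw [← inversionSign_simple_eq_neg_one_iff_isLeftDescent]
  rcases Int.units_eq_one_or (cs.inversionSign w (s i)) with h | h <;> simp [h]

lemma simple_mem_parab {I : Set B} {i : B} (hi : i ∈ I) : s i ∈ cs.parab I :=
  Subgroup.subset_closure ⟨i, hi, rfl⟩

lemma parab_induction_left {I : Set B} {p : W → Prop} (one : p 1)
    (mul : ∀ i ∈ I, ∀ w ∈ cs.parab I, p w → p (s i * w)) {a : W} (ha : a ∈ cs.parab I) :
    p a := by
  have step : ∀ i ∈ I, ∀ w, w ∈ cs.parab I ∧ p w → s i * w ∈ cs.parab I ∧ p (s i * w) :=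
    fun i hi w hw => ⟨mul_mem (cs.simple_mem_parab hi) hw.1, mul i hi w hw.1 hw.2⟩
  suffices a ∈ cs.parab I ∧ p a from this.2
  induction ha using Subgroup.closure_induction_left with
  | one => exact ⟨one_mem _, one⟩
  | mul_left _ hx _ _ ih =>
    obtain ⟨i, hi, rfl⟩ := hx
    exact step i hi _ ih
  | inv_mul_cancel _ hx _ _ ih =>
    obtain ⟨i, hi, rfl⟩ := hx
    rw [inv_simple]
    exact step i hi _ ih

lemma exists_reduced_word_of_mem_parab {I : Set B} {a : W} (ha : a ∈ cs.parab I) :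
    ∃ α : List B, cs.IsReduced α ∧ (∀ x ∈ α, x ∈ I) ∧ π α = a := by
  refine cs.parab_induction_left
    (p := fun a => ∃ α : List B, cs.IsReduced α ∧ (∀ x ∈ α, x ∈ I) ∧ π α = a)
    ⟨[], by simp [IsReduced], by simp, rfl⟩ ?_ ha
  rintro i hi _ - ⟨α, hα, hαI, rfl⟩
  rcases cs.length_simple_mul (π α) i with hup | hdown
  · refine ⟨i :: α, ?_, forall_mem_cons.2 ⟨hi, hαI⟩, wordProd_cons ..⟩
    simp [IsReduced, wordProd_cons, hup, hα.eq]
  · obtain ⟨l, hl, he⟩ := cs.exists_eraseIdx_of_isLeftDescent (ω := α) (i := i)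
      (by unfold IsLeftDescent; omega)
    refine ⟨α.eraseIdx l, ?_, fun x hx => hαI x (mem_of_mem_eraseIdx hx), he.symm⟩
    have := length_eraseIdx_add_one hl
    have := hα.eq
    unfold IsReduced
    rw [← he]
    omega

lemma exists_isLeftDescent_of_mem_parab {I : Set B} {a : W} (ha : a ∈ cs.parab I)
    (h1 : a ≠ 1) : ∃ i ∈ I, cs.IsLeftDescent a i := by
  obtain ⟨_ | ⟨i, α⟩, hα, hαI, rfl⟩ := cs.exists_reduced_word_of_mem_parab ha
  · exact absurd cs.wordProd_nil h1
  · refine ⟨i, hαI i mem_cons_self, ?_⟩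
    have := cs.length_wordProd_le α
    have := hα.eq
    rw [IsLeftDescent, wordProd_cons, simple_mul_simple_cancel_left, ← wordProd_cons]
    simp only [length_cons] at this
    omega

lemma exists_mem_parab_forall_length_le (I : Set B) (x : W) :
    ∃ b ∈ cs.parab I, ∀ a ∈ cs.parab I, ℓ (b * x) ≤ ℓ (a * (b * x)) := by
  obtain ⟨_, ⟨b, hb, rfl⟩, hmin⟩ :=
    wellFounded_lt.has_min ((fun a => ℓ (a * x)) '' cs.parab I) ⟨_, 1, one_mem _, rfl⟩
  exact ⟨b, hb, fun a ha => not_lt.1 fun h =>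
    hmin _ ⟨a * b, mul_mem ha hb, by simp only [mul_assoc]⟩ h⟩

lemma length_mul_of_forall_length_le {I : Set B} {x : W}
    (hx : ∀ a ∈ cs.parab I, ℓ x ≤ ℓ (a * x)) {a : W} (ha : a ∈ cs.parab I) :
    ℓ (a * x) = ℓ a + ℓ x := by
  refine cs.parab_induction_left (p := fun a => ℓ (a * x) = ℓ a + ℓ x) (by simp) ?_ ha
  intro i hi a ha ih
  have hsign : cs.inversionSign x (a⁻¹ * s i * a) = 1 := by
    rcases Int.units_eq_one_or (cs.inversionSign x (a⁻¹ * s i * a)) with h | h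
    · exact h
    · have hr : a⁻¹ * s i * a ∈ cs.parab I :=
        mul_mem (mul_mem (inv_mem ha) (cs.simple_mem_parab hi)) ha
      exact absurd (hx _ hr) (not_le.2 (cs.length_mul_lt_of_inversionSign_eq_neg_one h))
  have hdesc : cs.IsLeftDescent (a * x) i ↔ cs.IsLeftDescent a i := by
    rw [← inversionSign_simple_eq_neg_one_iff_isLeftDescent,
      ← inversionSign_simple_eq_neg_one_iff_isLeftDescent, inversionSign_mul, hsign, mul_one]
  simp only [IsLeftDescent] at hdesc
  rw [mul_assoc]
  rcases cs.length_simple_mul a i with h | h <;>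
    rcases cs.length_simple_mul (a * x) i with h' | h' <;> omega

lemma length_mul_of_forall_not_isLeftDescent {I : Set B} {x : W}
    (hx : ∀ i ∈ I, ¬ cs.IsLeftDescent x i) {a : W} (ha : a ∈ cs.parab I) :
    ℓ (a * x) = ℓ a + ℓ x := by
  obtain ⟨b, hb, hmin⟩ := cs.exists_mem_parab_forall_length_le I x
  suffices hb1 : b = 1 by
    rw [hb1, one_mul] at hmin
    exact cs.length_mul_of_forall_length_le hmin ha
  by_contra hb1
  obtain ⟨i, hi, hdesc⟩ :=
    cs.exists_isLeftDescent_of_mem_parab (inv_mem hb) (inv_ne_one.2 hb1)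
  have h₁ := cs.length_mul_of_forall_length_le hmin (inv_mem hb)
  have h₂ := cs.length_mul_of_forall_length_le hmin
    (mul_mem (cs.simple_mem_parab hi) (inv_mem hb))
  rw [inv_mul_cancel_left] at h₁
  rw [mul_assoc, inv_mul_cancel_left] at h₂
  exact hx i hi (by unfold IsLeftDescent at hdesc ⊢; omega)

lemma mul_eq_of_forall_not_isLeftDescent {I : Set B} {x a : W}
    (hx : ∀ i ∈ I, ¬ cs.IsLeftDescent x i) (hax : ∀ i ∈ I, ¬ cs.IsLeftDescent (a * x) i)
    (ha : a ∈ cs.parab I) : a * x = x := by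
  have h₁ := cs.length_mul_of_forall_not_isLeftDescent hx ha
  have h₂ := cs.length_mul_of_forall_not_isLeftDescent hax (inv_mem ha)
  rw [inv_mul_cancel_left, length_inv] at h₂
  have : a = 1 := cs.length_eq_zero_iff.1 (by omega)
  rw [this, one_mul]

-- Deodhar's lemma
lemma forall_not_isLeftDescent_mul_simple_or {I : Set B} {y : W}
    (hy : ∀ i ∈ I, ¬ cs.IsLeftDescent y i) (j : B) :
    (∀ i ∈ I, ¬ cs.IsLeftDescent (y * s j) i) ∨ ∃ i ∈ I, y * s j = s i * y := by
  refine or_iff_not_imp_left.2 fun h => ?_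
  simp only [not_forall, not_not] at h
  obtain ⟨i, hi, hdesc⟩ := h
  refine ⟨i, hi, ?_⟩
  rw [← inversionSign_simple_eq_neg_one_iff_isLeftDescent, inversionSign_mul,
    (cs.inversionSign_simple_eq_one_iff y i).2 (hy i hi), one_mul,
    inversionSign_simple_eq_neg_one_iff] at hdesc
  rw [← hdesc]
  group

lemma exists_mul_of_mem_doset {I J : Set B} {y w : W} (hy : ∀ i ∈ I, ¬ cs.IsLeftDescent y i)
    (hw : ∀ i ∈ I, ¬ cs.IsLeftDescent w i) (h : w ∈ cs.doset I y J) :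
    ∃ c ∈ cs.parab J, w = y * c := by
  obtain ⟨a, ha, b, hb, hwab⟩ := h
  refine cs.parab_induction_left (p := fun b => ∀ y, (∀ i ∈ I, ¬ cs.IsLeftDescent y i) →
    ∀ a ∈ cs.parab I, w = a * y * b → ∃ c ∈ cs.parab J, w = y * c) ?_ ?_ hb y hy a ha hwab
  · rintro y hy a ha rfl
    rw [mul_one] at hw ⊢
    exact ⟨1, one_mem _, by rw [mul_one, cs.mul_eq_of_forall_not_isLeftDescent hy hw ha]⟩
  · intro j hj b _ ih y hy a ha hwab
    rcases cs.forall_not_isLeftDescent_mul_simple_or hy j with hyj | ⟨i, hi, hyj⟩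
    · obtain ⟨c, hc, hwc⟩ := ih (y * s j) hyj a ha (by rw [hwab]; group)
      exact ⟨s j * c, mul_mem (cs.simple_mem_parab hj) hc, by rw [hwc]; group⟩
    · refine ih y hy (a * s i) (mul_mem ha (cs.simple_mem_parab hi)) ?_
      rw [hwab, mul_assoc a (s i), ← hyj]
      group

lemma eq_of_isMinRep_of_mem_doset {I J : Set B} {u w : W} (hu : cs.isMinRep I u J)
    (hw : cs.isMinRep I w J) (h : w ∈ cs.doset I u J) : w = u := by
  obtain ⟨c, hc, rfl⟩ := cs.exists_mul_of_mem_doset hu.1 hw.1 h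
  have hinv : ∀ x : W, cs.isMinRep I x J → ∀ j ∈ J, ¬ cs.IsLeftDescent x⁻¹ j :=
    fun x hx j hj => by rw [isLeftDescent_inv_iff]; exact hx.2 j hj
  have := cs.mul_eq_of_forall_not_isLeftDescent (hinv u hu)
    (by rw [← mul_inv_rev]; exact hinv _ hw) (inv_mem hc)
  rwa [← mul_inv_rev, inv_inj] at this

lemma simple_mul_mem_doset {I J : Set B} {u w : W} {i : B} (hi : i ∈ I)
    (hw : w ∈ cs.doset I u J) : s i * w ∈ cs.doset I u J := by
  obtain ⟨a, ha, b, hb, rfl⟩ := hw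
  exact ⟨s i * a, mul_mem (cs.simple_mem_parab hi) ha, b, hb, by group⟩

lemma mul_simple_mem_doset {I J : Set B} {u w : W} {j : B} (hj : j ∈ J)
    (hw : w ∈ cs.doset I u J) : w * s j ∈ cs.doset I u J := by
  obtain ⟨a, ha, b, hb, rfl⟩ := hw
  exact ⟨a, ha, b * s j, mul_mem hb (cs.simple_mem_parab hj), by group⟩

lemma mem_doset_self (I J : Set B) (w : W) : w ∈ cs.doset I w J :=
  ⟨1, one_mem _, 1, one_mem _, by group⟩

lemma tsCov_simple_mul_of_isLeftDescent {w : W} {i : B} (h : cs.IsLeftDescent w i) :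
    cs.tsCov (s i * w) w := by
  refine ⟨?_, Or.inl ⟨i, by simp⟩⟩
  unfold IsLeftDescent at h
  rcases cs.length_simple_mul w i with h' | h' <;> omega

lemma tsCov_mul_simple_of_isRightDescent {w : W} {j : B} (h : cs.IsRightDescent w j) :
    cs.tsCov (w * s j) w := by
  refine ⟨?_, Or.inr ⟨j, by simp⟩⟩
  unfold IsRightDescent at h
  rcases cs.length_mul_simple w j with h' | h' <;> omega

lemma tsLE_of_mem_doset {I J : Set B} {u w : W} (hu : cs.isMinRep I u J)
    (hw : w ∈ cs.doset I u J) : cs.tsLE u w := by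
  induction hn : ℓ w using Nat.strong_induction_on generalizing w with
  | _ n ih =>
  by_cases hL : ∃ i ∈ I, cs.IsLeftDescent w i
  · obtain ⟨i, hi, hdesc⟩ := hL
    exact (ih _ (hn ▸ hdesc) (cs.simple_mul_mem_doset hi hw) rfl).tail
      (cs.tsCov_simple_mul_of_isLeftDescent hdesc)
  by_cases hR : ∃ j ∈ J, cs.IsRightDescent w j
  · obtain ⟨j, hj, hdesc⟩ := hR
    exact (ih _ (hn ▸ hdesc) (cs.mul_simple_mem_doset hj hw) rfl).tail
      (cs.tsCov_mul_simple_of_isRightDescent hdesc)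
  simp only [not_exists, not_and] at hL hR
  rw [cs.eq_of_isMinRep_of_mem_doset hu ⟨hL, hR⟩ hw]
  exact .refl

end CoxeterSystem

theorem xiLE_imp_tsLE_general (cs : CoxeterSystem M W) (F G : Set B × W × Set B)
    (hF : cs.inXi F) (h : cs.xiLE F G) :
    cs.tsLE F.2.1 G.2.1 :=
  cs.tsLE_of_mem_doset hF (h.2.2 (cs.mem_doset_self _ _ _))

/-- If `(I,u,J) ≤ (I',v,J')` in the two-sided Coxeter complex `Ξ`, then
`u ≤ v` in the two-sided weak order. -/
theorem xiLE_imp_tsLE (cs : CoxeterSystem M W) (F G : Set B × W × Set B)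
    (hF : cs.inXi F) (hG : cs.inXi G) (h : cs.xiLE F G) :
    cs.tsLE F.2.1 G.2.1 :=
  xiLE_imp_tsLE_general cs F G hF h
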